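/- Let n ≥ 5 and let i, j, s, t be pairwise distinct indices in {1,…,n}. Then the normal subgroup of the Steinberg group St_n(ℤ) normally generated by the element h_{ij}·h_{st} contains the element a = h_{12}². -/

import Mathlib

/-!
Conjugation by `ω_{ij}` permutes the root subgroups `x_{pq}(·)` as the transposition `(i j)`
permutes index pairs, negating the parameter when `j ∈ {p, q}`. Hence `ω`'s on disjoint index
pairs commute, `ω_{sk}` conjugates `ω_{st}` to `ω_{kt}` and `ω_{kt}` to `ω_{st}⁻¹`, so
`h_{sk}` conjugates `h_{st}` to `h_{st}⁻¹`. With `k ∉ {i, j, s, t}`, conjugating `h_{ij} h_{st}` by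
`h_{sk}` gives `h_{ij} h_{st}⁻¹`, and multiplying the two gives `h_{ij}²`. Conjugating by
suitable `ω`'s then moves `h_{ij}²` to `h_{pq}²` for every `p ≠ q`, in particular to `a`.
-/

namespace Steinberg

open scoped commutatorElement

/-- Generators of the Steinberg group `St_n(ℤ)`: a symbol `x_{ij}(r)` for each
pair of distinct indices `i ≠ j` in `Fin n` and each integer `r`. -/
def Gen (n : ℕ) : Type := { p : Fin n × Fin n // p.1 ≠ p.2 } × ℤ

/-- The Steinberg relations: `x_{ij}(r) x_{ij}(s) = x_{ij}(r+s)`,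
`⁅x_{ij}(r), x_{jk}(s)⁆ = x_{ik}(rs)` for `i ≠ k`, and
`⁅x_{ij}(r), x_{pq}(s)⁆ = 1` for `j ≠ p`, `i ≠ q`. -/
def rels (n : ℕ) : Set (FreeGroup (Gen n)) :=
  { w | (∃ (i j : Fin n) (h : i ≠ j) (r s : ℤ),
      w = FreeGroup.of (⟨⟨i, j⟩, h⟩, r) * FreeGroup.of (⟨⟨i, j⟩, h⟩, s) *
          (FreeGroup.of (⟨⟨i, j⟩, h⟩, r + s))⁻¹) ∨
    (∃ (i j k : Fin n) (hij : i ≠ j) (hjk : j ≠ k) (hik : i ≠ k) (r s : ℤ),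
      w = ⁅FreeGroup.of ((⟨⟨i, j⟩, hij⟩ : { p : Fin n × Fin n // p.1 ≠ p.2 }), r),
           FreeGroup.of ((⟨⟨j, k⟩, hjk⟩ : { p : Fin n × Fin n // p.1 ≠ p.2 }), s)⁆ *
          (FreeGroup.of (⟨⟨i, k⟩, hik⟩, r * s))⁻¹) ∨
    (∃ (i j p q : Fin n) (hij : i ≠ j) (hpq : p ≠ q) (r s : ℤ),
      j ≠ p ∧ i ≠ q ∧
      w = ⁅FreeGroup.of ((⟨⟨i, j⟩, hij⟩ : { p : Fin n × Fin n // p.1 ≠ p.2 }), r),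
           FreeGroup.of ((⟨⟨p, q⟩, hpq⟩ : { p : Fin n × Fin n // p.1 ≠ p.2 }), s)⁆) }

/-- The Steinberg group `St_n(ℤ)`, presented by the generators `x_{ij}(r)` and the
Steinberg relations. -/
def St (n : ℕ) : Type := PresentedGroup (rels n)

instance (n : ℕ) : Group (St n) := by unfold St; infer_instance

/-- The generator `x_{ij}(r)` of `St_n(ℤ)`. -/
def x {n : ℕ} (i j : Fin n) (h : i ≠ j) (r : ℤ) : St n :=
  PresentedGroup.of (⟨⟨i, j⟩, h⟩, r)

/-- `ω_{ij} = x_{ij}(-1) x_{ji}(1) x_{ij}(-1)`. -/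
def w {n : ℕ} (i j : Fin n) (h : i ≠ j) : St n :=
  x i j h (-1) * x j i h.symm 1 * x i j h (-1)

/-- `h_{ij} = ω_{ij} ω_{ij}`. -/
def hElt {n : ℕ} (i j : Fin n) (h : i ≠ j) : St n := w i j h * w i j h

/-- The central element `a = h_{12}²` (indices `1,2` are `⟨0,_⟩, ⟨1,_⟩ : Fin n`). -/
def aElt {n : ℕ} (hn : 3 ≤ n) : St n :=
  hElt (⟨0, by omega⟩ : Fin n) (⟨1, by omega⟩ : Fin n) (by simp [Fin.ext_iff]) ^ 2

end Steinberg

theorem Subgroup.Normal.mem_of_semiconjBy {G : Type*} [Group G] {N : Subgroup G}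
    (hN : N.Normal) {g a b : G} (h : SemiconjBy g a b) (ha : a ∈ N) : b ∈ N := by
  rw [eq_mul_inv_of_mul_eq h.eq.symm]
  exact hN.conj_mem a ha g

theorem Fin.exists_notMem_of_card_lt {n : ℕ} {s : Finset (Fin n)} (hs : s.card < n) :
    ∃ k, k ∉ s := by
  obtain ⟨k, -, hk⟩ := Finset.exists_mem_notMem_of_card_lt_card (s := s) (t := Finset.univ)
    (by rwa [Finset.card_univ, Fintype.card_fin])
  exact ⟨k, hk⟩

namespace Steinberg

open scoped commutatorElement

variable {n : ℕ}

private abbrev gen {i j : Fin n} (h : i ≠ j) (r : ℤ) : FreeGroup (Gen n) :=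
  FreeGroup.of (⟨⟨i, j⟩, h⟩, r)

theorem x_mul_x {i j : Fin n} (hij : i ≠ j) (r s : ℤ) :
    x i j hij r * x i j hij s = x i j hij (r + s) := by
  have hrel : gen hij r * gen hij s * (gen hij (r + s))⁻¹ ∈ rels n :=
    Or.inl ⟨i, j, hij, r, s, rfl⟩
  exact (map_mul _ _ _).symm.trans (PresentedGroup.mk_eq_mk_of_mul_inv_mem hrel)

theorem commutatorElement_x_x {i j k : Fin n} (hij : i ≠ j) (hjk : j ≠ k) (hik : i ≠ k)
    (r s : ℤ) : ⁅x i j hij r, x j k hjk s⁆ = x i k hik (r * s) := by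
  have hrel : ⁅gen hij r, gen hjk s⁆ * (gen hik (r * s))⁻¹ ∈ rels n :=
    Or.inr (Or.inl ⟨i, j, k, hij, hjk, hik, r, s, rfl⟩)
  exact (map_commutatorElement _ _ _).symm.trans (PresentedGroup.mk_eq_mk_of_mul_inv_mem hrel)

theorem commute_x_x {i j p q : Fin n} (hij : i ≠ j) (hpq : p ≠ q) (hjp : j ≠ p) (hiq : i ≠ q)
    (r s : ℤ) : Commute (x i j hij r) (x p q hpq s) := by
  have hrel : ⁅gen hij r, gen hpq s⁆ ∈ rels n :=
    Or.inr (Or.inr ⟨i, j, p, q, hij, hpq, r, s, hjp, hiq, rfl⟩)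
  exact commutatorElement_eq_one_iff_commute.mp
    ((map_commutatorElement _ _ _).symm.trans (PresentedGroup.one_of_mem hrel))

theorem x_zero {i j : Fin n} (hij : i ≠ j) : x i j hij 0 = 1 :=
  left_eq_mul.mp (by rw [x_mul_x, add_zero] : x i j hij 0 = x i j hij 0 * x i j hij 0)

theorem x_inv {i j : Fin n} (hij : i ≠ j) (r : ℤ) : (x i j hij r)⁻¹ = x i j hij (-r) :=
  inv_eq_of_mul_eq_one_right (by rw [x_mul_x, add_neg_cancel, x_zero])

theorem x_mul_x_assoc {i j : Fin n} (hij : i ≠ j) (r s : ℤ) (g : St n) :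
    x i j hij r * (x i j hij s * g) = x i j hij (r + s) * g := by
  rw [← mul_assoc, x_mul_x]

theorem x_ij_mul_x_jk {i j k : Fin n} (hij : i ≠ j) (hjk : j ≠ k) (hik : i ≠ k) (r s : ℤ) :
    x i j hij r * x j k hjk s = x i k hik (r * s) * (x j k hjk s * x i j hij r) := by
  rw [← commutatorElement_x_x hij hjk hik]; group

theorem x_jk_mul_x_ij {i j k : Fin n} (hij : i ≠ j) (hjk : j ≠ k) (hik : i ≠ k) (r s : ℤ) :
    x j k hjk s * x i j hij r = x i k hik (-(r * s)) * (x i j hij r * x j k hjk s) := by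
  rw [x_ij_mul_x_jk hij hjk hik, x_mul_x_assoc, neg_add_cancel, x_zero, one_mul]

theorem x_ij_mul_x_jk_assoc {i j k : Fin n} (hij : i ≠ j) (hjk : j ≠ k) (hik : i ≠ k)
    (r s : ℤ) (g : St n) :
    x i j hij r * (x j k hjk s * g) = x i k hik (r * s) * (x j k hjk s * (x i j hij r * g)) := by
  rw [← mul_assoc, x_ij_mul_x_jk hij hjk hik, mul_assoc, mul_assoc]

theorem x_jk_mul_x_ij_assoc {i j k : Fin n} (hij : i ≠ j) (hjk : j ≠ k) (hik : i ≠ k)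
    (r s : ℤ) (g : St n) :
    x j k hjk s * (x i j hij r * g) =
      x i k hik (-(r * s)) * (x i j hij r * (x j k hjk s * g)) := by
  rw [← mul_assoc, x_jk_mul_x_ij hij hjk hik, mul_assoc, mul_assoc]

theorem w_eq {i j : Fin n} (hij : i ≠ j) :
    w i j hij = x i j hij (-1) * (x j i hij.symm 1 * x i j hij (-1)) :=
  mul_assoc _ _ _

theorem w_inv {i j : Fin n} (hij : i ≠ j) :
    (w i j hij)⁻¹ = x i j hij 1 * x j i hij.symm (-1) * x i j hij 1 := by
  simp only [w, mul_inv_rev, x_inv, neg_neg, mul_assoc]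

theorem commute_w_x {i j p q : Fin n} (hij : i ≠ j) (hpq : p ≠ q) (hip : i ≠ p)
    (hiq : i ≠ q) (hjp : j ≠ p) (hjq : j ≠ q) (r : ℤ) :
    Commute (w i j hij) (x p q hpq r) := by
  rw [Commute, SemiconjBy, w_eq, mul_assoc, mul_assoc, (commute_x_x hij hpq hjp hiq _ _).eq,
    (commute_x_x hij.symm hpq hip hjq _ _).left_comm, (commute_x_x hij hpq hjp hiq _ _).left_comm]

theorem semiconjBy_w_x_ik {i j k : Fin n} (hij : i ≠ j) (hjk : j ≠ k) (hik : i ≠ k) (r : ℤ) :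
    SemiconjBy (w i j hij) (x i k hik r) (x j k hjk r) := by
  rw [SemiconjBy, w_eq, mul_assoc, mul_assoc, (commute_x_x hij hik hij.symm hik _ _).eq,
    x_ij_mul_x_jk_assoc hij.symm hik hjk 1 r, x_ij_mul_x_jk_assoc hij hjk hik (-1) (1 * r),
    (commute_x_x hij hik hij.symm hik _ _).left_comm,
    (commute_x_x hjk hik hik.symm hjk _ _).left_comm, x_mul_x_assoc]
  simp only [one_mul, neg_one_mul, neg_add_cancel, x_zero]

theorem semiconjBy_w_x_ki {i j k : Fin n} (hij : i ≠ j) (hjk : j ≠ k) (hik : i ≠ k) (r : ℤ) :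
    SemiconjBy (w i j hij) (x k i hik.symm r) (x k j hjk.symm r) := by
  rw [SemiconjBy, w_eq, mul_assoc, mul_assoc, x_jk_mul_x_ij hik.symm hij hjk.symm r (-1)]
  simp only [mul_neg_one, neg_neg]
  rw [x_jk_mul_x_ij_assoc hjk.symm hij.symm hik.symm r 1, mul_one,
    (commute_x_x hij.symm hik.symm hik hij.symm _ _).left_comm,
    x_jk_mul_x_ij_assoc hik.symm hij hjk.symm (-r) (-1)]
  simp only [mul_neg_one, neg_neg]
  rw [(commute_x_x hij hjk.symm hjk hij _ _).left_comm,
    x_jk_mul_x_ij_assoc hik.symm hij hjk.symm r (-1)]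
  simp only [mul_neg_one, neg_neg]
  rw [(commute_x_x hik.symm hjk.symm hik hjk.symm _ _).left_comm,
    (commute_x_x hik.symm hjk.symm hik hjk.symm _ _).left_comm,
    x_mul_x_assoc, neg_add_cancel, x_zero, one_mul, x_mul_x_assoc, neg_add_cancel, x_zero, one_mul]

theorem semiconjBy_w_x_jk {i j k : Fin n} (hij : i ≠ j) (hjk : j ≠ k) (hik : i ≠ k) (r : ℤ) :
    SemiconjBy (w i j hij) (x j k hjk r) (x i k hik (-r)) := by
  rw [SemiconjBy, w_eq, mul_assoc, mul_assoc, x_ij_mul_x_jk hij hjk hik (-1) r,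
    x_ij_mul_x_jk_assoc hij.symm hik hjk 1 (-1 * r),
    (commute_x_x hij.symm hjk hij hjk _ _).left_comm,
    (commute_x_x hik hjk hjk.symm hik _ _).left_comm]
  simp only [one_mul, neg_one_mul]
  rw [x_mul_x_assoc, neg_add_cancel, x_zero, one_mul,
    (commute_x_x hij hik hij.symm hik _ _).left_comm]

theorem semiconjBy_w_x_kj {i j k : Fin n} (hij : i ≠ j) (hjk : j ≠ k) (hik : i ≠ k) (r : ℤ) :
    SemiconjBy (w i j hij) (x k j hjk.symm r) (x k i hik.symm (-r)) := by
  rw [SemiconjBy, w_eq, mul_assoc, mul_assoc, (commute_x_x hij hjk.symm hjk hij _ _).eq,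
    x_jk_mul_x_ij_assoc hjk.symm hij.symm hik.symm r 1,
    x_jk_mul_x_ij_assoc hik.symm hij hjk.symm (-(r * 1)) (-1),
    (commute_x_x hij hjk.symm hjk hij _ _).left_comm,
    (commute_x_x hik.symm hjk.symm hik hjk.symm _ _).left_comm, x_mul_x_assoc]
  simp only [mul_one, mul_neg, neg_neg, neg_add_cancel, x_zero, one_mul]

theorem semiconjBy_w_of_semiconjBy_x {g : St n} {i j p q : Fin n} {hij : i ≠ j} {hpq : p ≠ q}
    (h : ∀ r, SemiconjBy g (x i j hij r) (x p q hpq r))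
    (h' : ∀ r, SemiconjBy g (x j i hij.symm r) (x q p hpq.symm r)) :
    SemiconjBy g (w i j hij) (w p q hpq) :=
  ((h _).mul_right (h' _)).mul_right (h _)

theorem semiconjBy_w_inv_of_semiconjBy_x_neg {g : St n} {i j p q : Fin n} {hij : i ≠ j}
    {hpq : p ≠ q} (h : ∀ r, SemiconjBy g (x i j hij r) (x p q hpq (-r)))
    (h' : ∀ r, SemiconjBy g (x j i hij.symm r) (x q p hpq.symm (-r))) :
    SemiconjBy g (w i j hij) (w p q hpq)⁻¹ := by
  have hx := ((h (-1)).mul_right (h' 1)).mul_right (h (-1))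
  rw [neg_neg] at hx
  rw [w_inv]
  exact hx

theorem commute_w_w {i j s t : Fin n} (hij : i ≠ j) (hst : s ≠ t) (his : i ≠ s) (hit : i ≠ t)
    (hjs : j ≠ s) (hjt : j ≠ t) : Commute (w i j hij) (w s t hst) :=
  semiconjBy_w_of_semiconjBy_x (commute_w_x hij hst his hit hjs hjt)
    (commute_w_x hij hst.symm hit his hjt hjs)

theorem semiconjBy_w_ik_w_ij {i j k : Fin n} (hij : i ≠ j) (hik : i ≠ k) (hkj : k ≠ j) :
    SemiconjBy (w i k hik) (w i j hij) (w k j hkj) :=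
  semiconjBy_w_of_semiconjBy_x (semiconjBy_w_x_ik hik hkj hij) (semiconjBy_w_x_ki hik hkj hij)

theorem semiconjBy_w_jk_w_ij {i j k : Fin n} (hij : i ≠ j) (hjk : j ≠ k) (hik : i ≠ k) :
    SemiconjBy (w j k hjk) (w i j hij) (w i k hik) :=
  semiconjBy_w_of_semiconjBy_x (semiconjBy_w_x_ki hjk hik.symm hij.symm)
    (semiconjBy_w_x_ik hjk hik.symm hij.symm)

theorem semiconjBy_w_ij_w_jk {i j k : Fin n} (hij : i ≠ j) (hjk : j ≠ k) (hik : i ≠ k) :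
    SemiconjBy (w i j hij) (w j k hjk) (w i k hik)⁻¹ :=
  semiconjBy_w_inv_of_semiconjBy_x_neg (semiconjBy_w_x_jk hij hjk hik)
    (semiconjBy_w_x_kj hij hjk hik)

theorem semiconjBy_hElt_of_semiconjBy_w {g : St n} {i j p q : Fin n} {hij : i ≠ j}
    {hpq : p ≠ q} (h : SemiconjBy g (w i j hij) (w p q hpq)) :
    SemiconjBy g (hElt i j hij) (hElt p q hpq) :=
  h.mul_right h

theorem commute_hElt_hElt {i j s t : Fin n} (hij : i ≠ j) (hst : s ≠ t) (his : i ≠ s)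
    (hit : i ≠ t) (hjs : j ≠ s) (hjt : j ≠ t) : Commute (hElt i j hij) (hElt s t hst) :=
  have hw := commute_w_w hij hst his hit hjs hjt
  (hw.mul_left hw).mul_right (hw.mul_left hw)

theorem semiconjBy_hElt_hElt_inv {s t k : Fin n} (hst : s ≠ t) (hsk : s ≠ k) (hkt : k ≠ t) :
    SemiconjBy (hElt s k hsk) (hElt s t hst) (hElt s t hst)⁻¹ := by
  have hw := semiconjBy_w_ij_w_jk hsk hkt hst
  rw [show (hElt s t hst)⁻¹ = (w s t hst)⁻¹ * (w s t hst)⁻¹ from mul_inv_rev _ _]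
  exact (hw.mul_right hw).mul_left
    (semiconjBy_hElt_of_semiconjBy_w (semiconjBy_w_ik_w_ij hst hsk hkt))

section

variable {N : Subgroup (St n)} (hN : N.Normal)
include hN

theorem hElt_sq_mem_of_ne_fst {i j p : Fin n} {hij : i ≠ j} (hpj : p ≠ j)
    (h : hElt i j hij ^ 2 ∈ N) : hElt p j hpj ^ 2 ∈ N := by
  rcases eq_or_ne i p with rfl | hip
  · exact h
  · have hc : SemiconjBy (w i p hip) (hElt i j hij) (hElt p j hpj) :=
      semiconjBy_hElt_of_semiconjBy_w (semiconjBy_w_ik_w_ij hij hip hpj)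
    exact hN.mem_of_semiconjBy (hc.pow_right 2) h

theorem hElt_sq_mem_of_ne_snd {i j q : Fin n} {hij : i ≠ j} (hiq : i ≠ q)
    (h : hElt i j hij ^ 2 ∈ N) : hElt i q hiq ^ 2 ∈ N := by
  rcases eq_or_ne j q with rfl | hjq
  · exact h
  · have hc : SemiconjBy (w j q hjq) (hElt i j hij) (hElt i q hiq) :=
      semiconjBy_hElt_of_semiconjBy_w (semiconjBy_w_jk_w_ij hij hjq hiq)
    exact hN.mem_of_semiconjBy (hc.pow_right 2) h

theorem hElt_sq_mem (hn : 3 ≤ n) {i j p q : Fin n} {hij : i ≠ j} (hpq : p ≠ q)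
    (h : hElt i j hij ^ 2 ∈ N) : hElt p q hpq ^ 2 ∈ N := by
  rcases eq_or_ne i q with rfl | hiq
  · obtain ⟨k, hk⟩ := Fin.exists_notMem_of_card_lt (s := {i, j})
      (Finset.card_le_two.trans_lt (by omega))
    simp only [Finset.mem_insert, Finset.mem_singleton, not_or] at hk
    obtain ⟨hki, hkj⟩ := hk
    have hkj_mem : hElt k j hkj ^ 2 ∈ N := hElt_sq_mem_of_ne_fst hN hkj h
    exact hElt_sq_mem_of_ne_fst hN hpq (hElt_sq_mem_of_ne_snd hN hki hkj_mem)
  · exact hElt_sq_mem_of_ne_fst hN hpq (hElt_sq_mem_of_ne_snd hN hiq h)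

end

end Steinberg

open Steinberg in
/-- For `n ≥ 5` and pairwise distinct `i,j,s,t`, the normal subgroup of `St_n(ℤ)`
normally generated by `h_{ij}·h_{st}` contains `a = h_{12}²`. -/
theorem steinberg_normalClosure_hh_contains_a (n : ℕ) (hn : 5 ≤ n) (i j s t : Fin n)
    (hij : i ≠ j) (hst : s ≠ t) (his : i ≠ s) (hit : i ≠ t)
    (hjs : j ≠ s) (hjt : j ≠ t) :
    aElt (by omega) ∈
      Subgroup.normalClosure ({hElt i j hij * hElt s t hst} : Set (St n)) := by
  set N := Subgroup.normalClosure ({hElt i j hij * hElt s t hst} : Set (St n))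
  have hN : N.Normal := Subgroup.normalClosure_normal
  have hmem : hElt i j hij * hElt s t hst ∈ N := Subgroup.subset_normalClosure rfl
  obtain ⟨k, hk⟩ := Fin.exists_notMem_of_card_lt (s := {i, j, s, t})
    (Finset.card_le_four.trans_lt (by omega))
  simp only [Finset.mem_insert, Finset.mem_singleton, not_or] at hk
  obtain ⟨hki, hkj, hks, hkt⟩ := hk
  have hcomm := commute_hElt_hElt hij hst his hit hjs hjt
  have hmem' : hElt i j hij * (hElt s t hst)⁻¹ ∈ N := hN.mem_of_semiconjBy
    (SemiconjBy.mul_right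
      (commute_hElt_hElt (Ne.symm hks) hij (Ne.symm his) (Ne.symm hjs) hki hkj)
      (semiconjBy_hElt_hElt_inv hst (Ne.symm hks) hkt)) hmem
  have hsq : hElt i j hij ^ 2 ∈ N := by
    convert N.mul_mem hmem hmem' using 1
    rw [sq, mul_assoc, ← hcomm.left_comm, mul_inv_cancel, mul_one]
  exact hElt_sq_mem hN (by omega) _ hsq
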